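/- Pinched operator inequality used in the achievability proof: Let ρ_{AE} be a positive definite density operator on ℂ^{dA}⊗ℂ^{dE}, let ρ_E = Tr_A[ρ_{AE}] (which is then positive definite), let ν be the number of distinct eigenvalues of ρ_E, let c > 0, and let Π be the orthogonal projection onto the span of eigenvectors of c(1_A⊗ρ_E) − P_{ρ_E}[ρ_{AE}] with nonnegative eigenvalues. Then Π (1_A⊗ρ_E)^{−1} Π ≤ c·ν·(ρ_{AE})^{−1} in the Loewner order. -/

import Mathlib

open scoped Kronecker ComplexOrder
open MeasureTheory Matrix

noncomputable section

namespace QD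

/-! ### Haar measure on the unitary group -/

variable {n : Type*} [Fintype n] [DecidableEq n]

theorem isClosed_unitaryGroup :
    IsClosed ((Matrix.unitaryGroup n ℂ : Set (Matrix n n ℂ))) := by
  have h1 : Continuous fun A : Matrix n n ℂ => star A * A :=
    Continuous.matrix_mul continuous_star continuous_id
  have h2 : Continuous fun A : Matrix n n ℂ => A * star A :=
    Continuous.matrix_mul continuous_id continuous_star
  have heq : (Matrix.unitaryGroup n ℂ : Set (Matrix n n ℂ)) =
      {A | star A * A = 1} ∩ {A | A * star A = 1} := by
    ext A; exact Iff.rfl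
  rw [heq]
  exact (isClosed_eq h1 continuous_const).inter (isClosed_eq h2 continuous_const)

theorem isCompact_unitaryGroup :
    IsCompact ((Matrix.unitaryGroup n ℂ : Set (Matrix n n ℂ))) := by
  have hK : IsCompact {A : Matrix n n ℂ | ∀ i j, A i j ∈ Metric.closedBall (0 : ℂ) 1} := by
    have heq : {A : Matrix n n ℂ | ∀ i j, A i j ∈ Metric.closedBall (0 : ℂ) 1} =
        Set.pi Set.univ fun _ : n => Set.pi Set.univ fun _ : n => Metric.closedBall (0 : ℂ) 1 := by
      refine Set.eq_of_subset_of_subset ?_ ?_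
      · intro A hA
        exact Set.mem_univ_pi.mpr fun i => Set.mem_univ_pi.mpr fun j => hA i j
      · intro A hA i j
        exact Set.mem_univ_pi.mp (Set.mem_univ_pi.mp hA i) j
    rw [heq]
    exact isCompact_univ_pi fun _ => isCompact_univ_pi fun _ => isCompact_closedBall _ _
  refine IsCompact.of_isClosed_subset hK isClosed_unitaryGroup ?_
  intro A hA i j
  simpa [Metric.mem_closedBall, dist_eq_norm] using entry_norm_bound_of_unitary hA i j

instance : CompactSpace (Matrix.unitaryGroup n ℂ) :=
  isCompact_iff_compactSpace.mp isCompact_unitaryGroup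

instance : IsTopologicalGroup (Matrix.unitaryGroup n ℂ) where
  continuous_mul := by
    apply Continuous.subtype_mk
    exact ((continuous_subtype_val.comp continuous_fst).matrix_mul
      (continuous_subtype_val.comp continuous_snd))
  continuous_inv :=
    Continuous.subtype_mk (continuous_star.comp continuous_subtype_val) _

instance : MeasurableSpace (Matrix.unitaryGroup n ℂ) := borel _

instance : BorelSpace (Matrix.unitaryGroup n ℂ) := ⟨rfl⟩

/-- The normalized Haar (probability) measure on the unitary group of `ℂ^n`. -/
def haarU (n : Type*) [Fintype n] [DecidableEq n] : Measure (Matrix.unitaryGroup n ℂ) :=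
  Measure.haarMeasure (⊤ : TopologicalSpace.PositiveCompacts (Matrix.unitaryGroup n ℂ))

/-- Entrywise (Bochner) integral of a matrix-valued function. -/
def matIntegral {G : Type*} [MeasurableSpace G] (μ : Measure G) {m l : Type*}
    (f : G → Matrix m l ℂ) : Matrix m l ℂ :=
  Matrix.of fun i j => ∫ g, f g i j ∂μ

/-! ### Basic matrix-analytic quantities -/

/-- Trace norm `‖X‖₁ = Tr √(XᴴX)`. -/
def traceNorm (X : Matrix n n ℂ) : ℝ :=
  (((Matrix.posSemidef_conjTranspose_mul_self X).1.eigenvectorUnitary : Matrix n n ℂ) *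
    Matrix.diagonal (((↑) : ℝ → ℂ) ∘ (Real.sqrt ·) ∘ (Matrix.posSemidef_conjTranspose_mul_self X).1.eigenvalues) *
    (star (Matrix.posSemidef_conjTranspose_mul_self X).1.eigenvectorUnitary : Matrix n n ℂ)).trace.re

/-- Hilbert–Schmidt (Schatten-2) norm `‖X‖₂ = √(Tr[XᴴX])`. -/
def hsNorm (X : Matrix n n ℂ) : ℝ :=
  Real.sqrt ((Xᴴ * X).trace.re)

/-- A density operator: positive semidefinite with unit trace. -/
def IsDensity (ρ : Matrix n n ℂ) : Prop := ρ.PosSemidef ∧ ρ.trace = 1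

/-- Eigenvalues of a matrix (junk value `0` off the Hermitian matrices). -/
def eigvals (H : Matrix n n ℂ) : n → ℝ :=
  if h : H.IsHermitian then h.eigenvalues else 0

/-- Number of distinct eigenvalues `|spec(H)|`. -/
def specCount (H : Matrix n n ℂ) : ℕ := (Finset.univ.image (eigvals H)).card

/-- Spectral projection of a Hermitian matrix onto the eigenspace of `μ`
(junk value `0` off the Hermitian matrices). -/
def eigProj (H : Matrix n n ℂ) (μ : ℝ) : Matrix n n ℂ :=
  if h : H.IsHermitian then
    (h.eigenvectorUnitary : Matrix n n ℂ) *
      Matrix.diagonal (fun i => if h.eigenvalues i = μ then (1 : ℂ) else 0) *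
      (h.eigenvectorUnitary : Matrix n n ℂ)ᴴ
  else 0

/-- The pinching map `P_H[L] = ∑_i e_i L e_i`, the sum running over the spectral
projections `e_i` onto the distinct eigenvalues of `H`. -/
def pinch (H L : Matrix n n ℂ) : Matrix n n ℂ :=
  ∑ μ ∈ Finset.univ.image (eigvals H), eigProj H μ * L * eigProj H μ

/-- The projection `{X ≤ Y}` onto the span of eigenvectors of `Y - X` with nonnegative
eigenvalues. -/
def projLE (X Y : Matrix n n ℂ) : Matrix n n ℂ :=
  if h : (Y - X).IsHermitian then
    (h.eigenvectorUnitary : Matrix n n ℂ) *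
      Matrix.diagonal (fun i => if 0 ≤ h.eigenvalues i then (1 : ℂ) else 0) *
      (h.eigenvectorUnitary : Matrix n n ℂ)ᴴ
  else 0

/-- The projection onto the span of eigenvectors of `H` with positive eigenvalues. -/
def projPos (H : Matrix n n ℂ) : Matrix n n ℂ :=
  if h : H.IsHermitian then
    (h.eigenvectorUnitary : Matrix n n ℂ) *
      Matrix.diagonal (fun i => if 0 < h.eigenvalues i then (1 : ℂ) else 0) *
      (h.eigenvectorUnitary : Matrix n n ℂ)ᴴ
  else 0

/-- Real power of a Hermitian matrix through the spectral decomposition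
(junk value `0` off the Hermitian matrices). -/
def rpow (H : Matrix n n ℂ) (r : ℝ) : Matrix n n ℂ :=
  if h : H.IsHermitian then
    (h.eigenvectorUnitary : Matrix n n ℂ) *
      Matrix.diagonal (fun i => ((h.eigenvalues i ^ r : ℝ) : ℂ)) *
      (h.eigenvectorUnitary : Matrix n n ℂ)ᴴ
  else 0

/-- Matrix logarithm of a Hermitian (positive definite) matrix through the spectral
decomposition (junk value `0` off the Hermitian matrices). -/
def matLog (H : Matrix n n ℂ) : Matrix n n ℂ :=
  if h : H.IsHermitian then
    (h.eigenvectorUnitary : Matrix n n ℂ) *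
      Matrix.diagonal (fun i => ((Real.log (h.eigenvalues i) : ℝ) : ℂ)) *
      (h.eigenvectorUnitary : Matrix n n ℂ)ᴴ
  else 0

/-! ### Divergences -/

/-- `ε`-information-spectrum divergence
`D_s^ε(ρ‖σ) = sup {log c : c > 0, Tr[ρ {ρ ≤ cσ}] ≤ ε}`. -/
def Ds (ε : ℝ) (ρ σ : Matrix n n ℂ) : ℝ :=
  sSup {x : ℝ | ∃ c : ℝ, 0 < c ∧ (ρ * projLE ρ ((c : ℂ) • σ)).trace.re ≤ ε ∧ x = Real.log c}

/-- `ε`-hypothesis-testing divergence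
`D_h^ε(ρ‖σ) = sup {-log Tr[σT] : 0 ≤ T ≤ 1, Tr[ρT] ≥ 1 - ε}`. -/
def Dh (ε : ℝ) (ρ σ : Matrix n n ℂ) : ℝ :=
  sSup {x : ℝ | ∃ T : Matrix n n ℂ, T.PosSemidef ∧ (1 - T).PosSemidef ∧
    1 - ε ≤ (ρ * T).trace.re ∧ x = -Real.log ((σ * T).trace.re)}

/-- `exp D₂*(ρ‖σ) = Tr[(σ^{-1/4} ρ σ^{-1/4})²]`, the exponential of the collision
divergence. -/
def expD2 (ρ σ : Matrix n n ℂ) : ℝ :=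
  ((rpow σ (-(1/4 : ℝ)) * ρ * rpow σ (-(1/4 : ℝ))) ^ 2).trace.re

/-- Quantum relative entropy `D(ρ‖σ) = Tr[ρ(log ρ - log σ)]`. -/
def relEntropy (ρ σ : Matrix n n ℂ) : ℝ :=
  (ρ * (matLog ρ - matLog σ)).trace.re

/-- Quantum relative entropy variance `V(ρ‖σ) = Tr[ρ(log ρ - log σ)²] - D(ρ‖σ)²`. -/
def relVar (ρ σ : Matrix n n ℂ) : ℝ :=
  ((ρ * (matLog ρ - matLog σ) ^ 2).trace.re) - (relEntropy ρ σ) ^ 2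

/-! ### Bipartite notions; the first factor is the `A` system -/

variable {a b e : Type*}

/-- Partial trace over the first tensor factor. -/
def ptraceFst [Fintype a] (X : Matrix (a × b) (a × b) ℂ) : Matrix b b ℂ :=
  Matrix.of fun i j => ∑ x, X (x, i) (x, j)

/-- Partial trace over the `A₁` factor of a tripartite `(A₁ ⊗ C) ⊗ E` system. -/
def ptraceA1 [Fintype a] (X : Matrix ((a × b) × e) ((a × b) × e) ℂ) :
    Matrix (b × e) (b × e) ℂ :=
  Matrix.of fun p q => ∑ x, X ((x, p.1), p.2) ((x, q.1), q.2)

/-- Pinching of a bipartite operator with respect to a state on the second factor: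
`P_{σ} = id ⊗ (pinching w.r.t. σ)`. -/
def pinchSnd [Fintype a] [DecidableEq a] [Fintype b] [DecidableEq b]
    (σ : Matrix b b ℂ) (L : Matrix (a × b) (a × b) ℂ) : Matrix (a × b) (a × b) ℂ :=
  ∑ μ ∈ Finset.univ.image (eigvals σ),
    ((1 : Matrix a a ℂ) ⊗ₖ eigProj σ μ) * L * ((1 : Matrix a a ℂ) ⊗ₖ eigProj σ μ)

/-- Conditional `ε`-hypothesis-testing entropy `H_h^ε(A|B)_ρ = -D_h^ε(ρ_{AB} ‖ 1_A ⊗ ρ_B)`. -/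
def Hh [Fintype a] [DecidableEq a] [Fintype b] [DecidableEq b] (ε : ℝ)
    (ρ : Matrix (a × b) (a × b) ℂ) : ℝ :=
  -(Dh ε ρ ((1 : Matrix a a ℂ) ⊗ₖ ptraceFst ρ))

/-- Conditional entropy `H(A|B)_ρ = -Tr[ρ (log ρ - log (1_A ⊗ ρ_B))]`. -/
def condEntropy [Fintype a] [DecidableEq a] [Fintype b] [DecidableEq b]
    (ρ : Matrix (a × b) (a × b) ℂ) : ℝ :=
  -relEntropy ρ ((1 : Matrix a a ℂ) ⊗ₖ ptraceFst ρ)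

/-- Conditional information variance `V(A|B)_ρ`. -/
def condVar [Fintype a] [DecidableEq a] [Fintype b] [DecidableEq b]
    (ρ : Matrix (a × b) (a × b) ℂ) : ℝ :=
  relVar ρ ((1 : Matrix a a ℂ) ⊗ₖ ptraceFst ρ)

/-- The average decoupling error
`Δ = (1/2) ∫ ‖Tr_{A₁}[(U ⊗ 1_E) ρ (U ⊗ 1_E)†] - (1_C/|C|) ⊗ ρ_E‖₁ dU`,
with respect to the normalized Haar measure, for a state on `(A₁ ⊗ C) ⊗ E`. -/
def decErr {a c e : Type*} [Fintype a] [DecidableEq a] [Fintype c] [DecidableEq c]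
    [Fintype e] [DecidableEq e] (ρ : Matrix ((a × c) × e) ((a × c) × e) ℂ) : ℝ :=
  (1 / 2) * ∫ U : Matrix.unitaryGroup (a × c) ℂ,
    traceNorm
      (ptraceA1 (((U : Matrix (a × c) (a × c) ℂ) ⊗ₖ (1 : Matrix e e ℂ)) * ρ *
          ((U : Matrix (a × c) (a × c) ℂ) ⊗ₖ (1 : Matrix e e ℂ))ᴴ) -
        (((Fintype.card c : ℂ)⁻¹ • (1 : Matrix c c ℂ)) ⊗ₖ ptraceFst ρ))
    ∂(haarU (a × c))

/-! ### Asymptotics -/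

/-- `n`-fold Kronecker tensor power of a matrix. -/
def kronPow {α : Type*} [Fintype α] (ρ : Matrix α α ℂ) (N : ℕ) :
    Matrix (Fin N → α) (Fin N → α) ℂ :=
  Matrix.of fun p q => ∏ i, ρ (p i) (q i)

/-- `n`-fold Kronecker tensor power of a bipartite matrix, regarded as a bipartite
matrix on `A^n ⊗ E^n`. -/
def tensorPow {α β : Type*} [Fintype α] [Fintype β] (ρ : Matrix (α × β) (α × β) ℂ) (N : ℕ) :
    Matrix ((Fin N → α) × (Fin N → β)) ((Fin N → α) × (Fin N → β)) ℂ :=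
  Matrix.of fun p q => ∏ i, ρ (p.1 i, p.2 i) (q.1 i, q.2 i)

/-- The maximal remainder dimension `ℓ^ε(A|E)_ρ`: the largest `dC` dividing `|A|` such
that, for an identification `A ≅ A₁ ⊗ C` with `|C| = dC`, the average decoupling error
is at most `ε`. -/
def maxRemDim {α β : Type*} [Fintype α] [DecidableEq α] [Fintype β] [DecidableEq β]
    (ε : ℝ) (ρ : Matrix (α × β) (α × β) ℂ) : ℕ :=
  sSup {dC : ℕ | dC ∣ Fintype.card α ∧
    ∃ φ : α ≃ Fin (Fintype.card α / dC) × Fin dC,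
      decErr (Matrix.of fun p q => ρ (φ.symm p.1, p.2) (φ.symm q.1, q.2)) ≤ ε}

/-- The inverse of the cumulative distribution function of the standard normal
distribution. -/
def PhiInv (ε : ℝ) : ℝ :=
  sSup {u : ℝ | (∫ t in Set.Iic u, Real.exp (-(t ^ 2) / 2) / Real.sqrt (2 * Real.pi)) ≤ ε}


/-- `1_{A₁} ⊗ Y` : reinsertion of the identity on the `A₁` factor of `(A₁ ⊗ A₂) ⊗ E`. -/
def insertIdFst {a1 a2 e : Type*} [DecidableEq a1] (Y : Matrix (a2 × e) (a2 × e) ℂ) :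
    Matrix ((a1 × a2) × e) ((a1 × a2) × e) ℂ :=
  Matrix.of fun p q => (if p.1.1 = q.1.1 then (1 : ℂ) else 0) * Y (p.1.2, p.2) (q.1.2, q.2)

/-- The swap operator `F = ∑_{i,j} |i⟩⟨j| ⊗ |j⟩⟨i|` on `ℂ^α ⊗ ℂ^α`. -/
def swapOp (α : Type*) [Fintype α] [DecidableEq α] : Matrix (α × α) (α × α) ℂ :=
  ∑ i : α, ∑ j : α, (Matrix.single i j (1 : ℂ)) ⊗ₖ (Matrix.single j i (1 : ℂ))

/-- The operator on `(ℂ^{A₁} ⊗ ℂ^{A₂}) ⊗ (ℂ^{A₁} ⊗ ℂ^{A₂})` acting as the identity on the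
two `A₁` factors and as the swap on the two `A₂` factors. -/
def partialSwapOp (a1 a2 : Type*) [DecidableEq a1] [DecidableEq a2] :
    Matrix ((a1 × a2) × (a1 × a2)) ((a1 × a2) × (a1 × a2)) ℂ :=
  Matrix.of fun p q =>
    if p.1.1 = q.1.1 ∧ p.2.1 = q.2.1 ∧ p.1.2 = q.2.2 ∧ p.2.2 = q.1.2 then (1 : ℂ) else 0

end QD

namespace QD

/-!
Pinching: `2 (ν P[ρ] - ρ) = ∑_{μ,μ'} (e_μ - e_μ') ρ (e_μ - e_μ')` for the spectral projections
`e_μ` of `1 ⊗ ρ_E`, so `ρ ≤ ν P[ρ]`. The pinched operator `P[ρ]` commutes with `T = 1 ⊗ ρ_E`,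
hence so does `Π`, and `Π P[ρ] Π ≤ c Π T Π ≤ c T`. Together, `Π ρ Π ≤ c ν T`; conjugating by
`T⁻¹ Π` gives `Q ρ Q ≤ c ν Q` for `Q = Π T⁻¹ Π`. For `B = ρ^{1/2} Q ρ^{1/2}` this says
`B² ≤ c ν B`, so the spectrum of `B` lies in `[0, c ν]`, i.e. `B ≤ c ν` and `Q ≤ c ν ρ⁻¹`.
-/

open scoped MatrixOrder

section SpectralProjections

variable {n : Type*} [Fintype n] [DecidableEq n] {H X Y : Matrix n n ℂ}

lemma continuousOn_spectrum (A : Matrix n n ℂ) (f : ℝ → ℝ) : ContinuousOn f (spectrum ℝ A) :=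
  A.finite_real_spectrum.continuousOn f

lemma isStarProjection_cfc {f : ℝ → ℝ} (hf : ∀ x, f x * f x = f x) (A : Matrix n n ℂ) :
    IsStarProjection (cfc f A) where
  isIdempotentElem := by
    rw [IsIdempotentElem, ← cfc_mul f f A (continuousOn_spectrum A f) (continuousOn_spectrum A f)]
    simp only [hf]
  isSelfAdjoint := cfc_predicate f A

lemma eigProj_eq_cfc (hH : H.IsHermitian) (μ : ℝ) :
    eigProj H μ = cfc (fun x => if x = μ then (1 : ℝ) else 0) H := by
  rw [hH.cfc_eq, IsHermitian.cfc, Unitary.conjStarAlgAut_apply, eigProj, dif_pos hH]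
  congr 3
  funext i
  split_ifs with hi <;> simp [hi]

lemma projLE_eq_cfc (h : (Y - X).IsHermitian) :
    projLE X Y = cfc (fun x => if 0 ≤ x then (1 : ℝ) else 0) (Y - X) := by
  rw [h.cfc_eq, IsHermitian.cfc, Unitary.conjStarAlgAut_apply, projLE, dif_pos h]
  congr 3
  funext i
  split_ifs with hi <;> simp [hi]

lemma coe_image_eigvals (hH : H.IsHermitian) :
    ((Finset.univ.image (eigvals H) : Finset ℝ) : Set ℝ) = spectrum ℝ H := by
  rw [Finset.coe_image, Finset.coe_univ, Set.image_univ, eigvals, dif_pos hH,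
    hH.spectrum_real_eq_range_eigenvalues]

lemma isStarProjection_eigProj (hH : H.IsHermitian) (μ : ℝ) : IsStarProjection (eigProj H μ) :=
  eigProj_eq_cfc hH μ ▸ isStarProjection_cfc (fun x => by split_ifs <;> norm_num) H

lemma eigProj_mul_self (hH : H.IsHermitian) (μ : ℝ) : eigProj H μ * H = μ • eigProj H μ := by
  have hcont := continuousOn_spectrum H
  rw [eigProj_eq_cfc hH]
  nth_rw 2 [← cfc_id' ℝ H hH.isSelfAdjoint]
  rw [← cfc_mul (fun x => if x = μ then (1 : ℝ) else 0) (fun x => x) H (hcont _) (hcont _),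
    ← cfc_const_mul μ _ H (hcont _)]
  congr 1
  ext x
  split_ifs with hx <;> simp [hx]

lemma self_mul_eigProj (hH : H.IsHermitian) (μ : ℝ) : H * eigProj H μ = μ • eigProj H μ := by
  rw [← eigProj_mul_self hH μ, eigProj_eq_cfc hH]
  exact ((Commute.refl H).cfc_real _).symm.eq

lemma sum_eigProj (hH : H.IsHermitian) :
    ∑ μ ∈ Finset.univ.image (eigvals H), eigProj H μ = 1 := by
  simp_rw [eigProj_eq_cfc hH]
  rw [← cfc_sum _ _ _ fun _ _ => continuousOn_spectrum H _]
  refine (cfc_congr fun x hx => ?_).trans (cfc_const_one ℝ H)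
  rw [← coe_image_eigvals hH, Finset.mem_coe] at hx
  simp [Finset.sum_apply, hx]

lemma isStarProjection_projLE (h : (Y - X).IsHermitian) : IsStarProjection (projLE X Y) :=
  projLE_eq_cfc h ▸ isStarProjection_cfc (fun x => by split_ifs <;> norm_num) _

lemma projLE_mul_sub_mul_projLE_nonneg (h : (Y - X).IsHermitian) :
    0 ≤ projLE X Y * (Y - X) * projLE X Y := by
  have hcont := continuousOn_spectrum (Y - X)
  rw [projLE_eq_cfc h]
  nth_rw 2 [← cfc_id' ℝ (Y - X) h.isSelfAdjoint]
  rw [← cfc_mul _ _ _ (hcont _) (hcont _), ← cfc_mul _ _ _ (hcont _) (hcont _)]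
  exact cfc_nonneg fun x _ => by split_ifs with hx <;> simp [hx]

lemma Commute.projLE {A : Matrix n n ℂ} (h : (Y - X).IsHermitian) (hA : Commute A (Y - X)) :
    Commute A (projLE X Y) :=
  projLE_eq_cfc h ▸ (hA.symm.cfc_real _).symm

end SpectralProjections

section Pinching

variable {n : Type*} [Fintype n] [DecidableEq n]

theorem le_card_smul_sum_conj {ι : Type*} (s : Finset ι) {f : ι → Matrix n n ℂ}
    (hf : ∀ i ∈ s, IsSelfAdjoint (f i)) (hsum : ∑ i ∈ s, f i = 1) {L : Matrix n n ℂ}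
    (hL : 0 ≤ L) : L ≤ (s.card : ℝ) • ∑ i ∈ s, f i * L * f i := by
  have hcross : ∑ i ∈ s, ∑ j ∈ s, f i * L * f j = L := by
    simp only [← Finset.mul_sum, ← Finset.sum_mul, hsum, Matrix.one_mul, Matrix.mul_one]
  have hexpand : ∑ i ∈ s, ∑ j ∈ s, star (f i - f j) * L * (f i - f j) =
      (2 : ℝ) • ((s.card : ℝ) • ∑ i ∈ s, f i * L * f i - L) := by
    calc ∑ i ∈ s, ∑ j ∈ s, star (f i - f j) * L * (f i - f j)
        = ∑ i ∈ s, ∑ j ∈ s, (f i * L * f i + f j * L * f j - f i * L * f j - f j * L * f i) := by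
          refine Finset.sum_congr rfl fun i hi => Finset.sum_congr rfl fun j hj => ?_
          rw [star_sub, (hf i hi).star_eq, (hf j hj).star_eq]
          noncomm_ring
      _ = (2 : ℝ) • ((s.card : ℝ) • ∑ i ∈ s, f i * L * f i - L) := by
          simp only [Finset.sum_sub_distrib, Finset.sum_add_distrib, Finset.sum_const, hcross]
          rw [Finset.sum_comm, hcross, ← Finset.smul_sum]
          module
  have h2 : 0 ≤ (2 : ℝ) • ((s.card : ℝ) • ∑ i ∈ s, f i * L * f i - L) :=
    hexpand ▸ Finset.sum_nonneg fun i _ => Finset.sum_nonneg fun j _ =>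
      star_left_conjugate_nonneg hL _
  have h1 := smul_nonneg (by norm_num : (0 : ℝ) ≤ 2⁻¹) h2
  rwa [smul_smul, inv_mul_cancel₀ two_ne_zero, one_smul, sub_nonneg] at h1

end Pinching

section BipartitePinching

variable (a : Type*) {b : Type*} [Fintype a] [DecidableEq a] [Fintype b] [DecidableEq b]

def ampliation : Matrix b b ℂ →⋆ₐ[ℂ] Matrix (a × b) (a × b) ℂ where
  toFun X := (1 : Matrix a a ℂ) ⊗ₖ X
  map_one' := one_kronecker_one
  map_mul' X Y := by rw [← mul_kronecker_mul, Matrix.one_mul]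
  map_zero' := kronecker_zero _
  map_add' := kronecker_add _
  commutes' r := by
    rw [Algebra.algebraMap_eq_smul_one, Algebra.algebraMap_eq_smul_one, kronecker_smul,
      one_kronecker_one]
  map_star' X := by
    rw [star_eq_conjTranspose, star_eq_conjTranspose, conjTranspose_kronecker, conjTranspose_one]

lemma ampliation_apply (X : Matrix b b ℂ) : ampliation a X = (1 : Matrix a a ℂ) ⊗ₖ X := rfl

variable {a} {σ : Matrix b b ℂ}

lemma le_specCount_smul_pinchSnd (hσ : σ.IsHermitian) {L : Matrix (a × b) (a × b) ℂ}
    (hL : 0 ≤ L) : L ≤ (specCount σ : ℝ) • pinchSnd σ L :=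
  le_card_smul_sum_conj (f := fun μ => ampliation a (eigProj σ μ)) _
    (fun μ _ => (isStarProjection_eigProj hσ μ).isSelfAdjoint.map _)
    (by rw [← map_sum, sum_eigProj hσ, map_one]) hL

lemma isSelfAdjoint_pinchSnd (hσ : σ.IsHermitian) {L : Matrix (a × b) (a × b) ℂ}
    (hL : IsSelfAdjoint L) : IsSelfAdjoint (pinchSnd σ L) :=
  isSelfAdjoint_sum _ fun μ _ =>
    hL.conjugate_self ((isStarProjection_eigProj hσ μ).isSelfAdjoint.map (ampliation a))

lemma commute_pinchSnd (hσ : σ.IsHermitian) (L : Matrix (a × b) (a × b) ℂ) :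
    Commute (pinchSnd σ L) (ampliation a σ) := by
  refine Commute.sum_left _ _ _ fun μ _ => ?_
  set e := ampliation a (eigProj σ μ)
  have he : e * ampliation a σ = (μ : ℂ) • e := by
    rw [← map_mul, eigProj_mul_self hσ, ← Complex.coe_smul, map_smul]
  have he' : ampliation a σ * e = (μ : ℂ) • e := by
    rw [← map_mul, self_mul_eigProj hσ, ← Complex.coe_smul, map_smul]
  change e * L * e * ampliation a σ = ampliation a σ * (e * L * e)
  rw [mul_assoc, he, ← mul_assoc, ← mul_assoc, he', mul_smul_comm, smul_mul_assoc, smul_mul_assoc]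

end BipartitePinching

section LoewnerOrder

theorem IsStarProjection.conjugate_le_of_commute {R : Type*} [Ring R] [StarRing R]
    [PartialOrder R] [StarOrderedRing R] {p x : R} (hp : IsStarProjection p) (hx : 0 ≤ x)
    (hpx : Commute p x) : p * x * p ≤ x := by
  have hpxp : p * x * p = p * x := by
    rw [mul_assoc, ← hpx.eq, ← mul_assoc, hp.isIdempotentElem.eq]
  have hcompl : x - p * x * p = (1 - p) * x * (1 - p) := by
    simp only [sub_mul, mul_sub, one_mul, mul_one, hpxp, ← hpx.eq]
    abel
  exact sub_nonneg.mp (hcompl ▸ hp.one_sub.isSelfAdjoint.conjugate_nonneg hx)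

variable {n : Type*} [Fintype n] [DecidableEq n]

theorem le_algebraMap_of_mul_self_le {B : Matrix n n ℂ} (hB : 0 ≤ B) {k : ℝ} (hk : 0 ≤ k)
    (h : B * B ≤ k • B) : B ≤ algebraMap ℝ _ k := by
  have hB' : IsSelfAdjoint B := IsSelfAdjoint.of_nonneg hB
  have hcont := continuousOn_spectrum B
  have hspec : ∀ x ∈ spectrum ℝ B, x * x ≤ k * x := by
    rw [← cfc_le_iff _ _ B (hcont _) (hcont _) hB', cfc_mul _ _ B (hcont _) (hcont _),
      cfc_id' ℝ B hB', cfc_const_mul_id k B hB']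
    exact h
  refine le_algebraMap_of_spectrum_le (fun x hx => ?_) hB'
  nlinarith [hspec x hx, spectrum_nonneg_of_nonneg hB hx]

theorem le_smul_inv_of_mul_mul_le {Q ρ : Matrix n n ℂ} (hQ : 0 ≤ Q) (hρ : ρ.PosDef) {k : ℝ}
    (hk : 0 ≤ k) (h : Q * ρ * Q ≤ k • Q) : Q ≤ k • ρ⁻¹ := by
  have hρ0 : 0 ≤ ρ := hρ.posSemidef.nonneg
  set s := CFC.sqrt ρ
  have hss : s * s = ρ := CFC.sqrt_mul_sqrt_self ρ hρ0
  have hs : IsSelfAdjoint s := IsSelfAdjoint.of_nonneg (CFC.sqrt_nonneg ρ)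
  have hdet : IsUnit s.det :=
    (isUnit_iff_isUnit_det s).mp ((CFC.isUnit_sqrt_iff ρ hρ0).mpr hρ.isUnit)
  have hBB : (s * Q * s) * (s * Q * s) ≤ k • (s * Q * s) := by
    have := hs.conjugate_le_conjugate h
    rw [mul_smul_comm, smul_mul_assoc, ← hss] at this
    simpa only [mul_assoc] using this
  have hs' : IsSelfAdjoint s⁻¹ := hs.isHermitian.inv
  have hle := hs'.conjugate_le_conjugate
    (le_algebraMap_of_mul_self_le (hs.conjugate_nonneg hQ) hk hBB)
  convert hle using 1
  · rw [mul_assoc, mul_assoc, mul_nonsing_inv s hdet, mul_one, ← mul_assoc,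
      nonsing_inv_mul s hdet, one_mul]
  · rw [Algebra.algebraMap_eq_smul_one, mul_smul_comm, smul_mul_assoc, mul_one,
      ← Matrix.mul_inv_rev, hss]

theorem conjugate_inv_le_smul_inv {p T ρ : Matrix n n ℂ} (hp : IsSelfAdjoint p) (hT : T.PosDef)
    (hρ : ρ.PosDef) {k : ℝ} (hk : 0 ≤ k) (h : p * ρ * p ≤ k • T) :
    p * T⁻¹ * p ≤ k • ρ⁻¹ := by
  refine le_smul_inv_of_mul_mul_le (hp.conjugate_nonneg hT.inv.posSemidef.nonneg) hρ hk ?_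
  have hstar : star (T⁻¹ * p) = p * T⁻¹ := by
    rw [star_mul, hp.star_eq, (hT.inv.isHermitian : IsSelfAdjoint T⁻¹).star_eq]
  have := star_left_conjugate_le_conjugate h (T⁻¹ * p)
  rw [hstar] at this
  convert this using 1
  · simp only [mul_assoc]
  · rw [mul_smul_comm, smul_mul_assoc]
    simp only [mul_assoc, nonsing_inv_mul_cancel_left _ _ ((isUnit_iff_isUnit_det T).mp hT.isUnit)]

end LoewnerOrder

section PartialTrace

variable {a b : Type*} [Fintype a]

lemma ptraceFst_eq_sum_submatrix (X : Matrix (a × b) (a × b) ℂ) :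
    ptraceFst X = ∑ x, X.submatrix (Prod.mk x) (Prod.mk x) := by
  ext i j
  simp [ptraceFst, Matrix.sum_apply]

lemma posDef_ptraceFst [Nonempty a] {ρ : Matrix (a × b) (a × b) ℂ} (hρ : ρ.PosDef) :
    (ptraceFst ρ).PosDef :=
  ptraceFst_eq_sum_submatrix ρ ▸
    posDef_sum Finset.univ_nonempty fun x _ => hρ.submatrix (Prod.mk_right_injective x)

end PartialTrace

section PinchedInequality

variable {a b : Type*} [Fintype a] [DecidableEq a] [Fintype b] [DecidableEq b]

theorem projLE_pinchSnd_mul_inv_mul_le {σ : Matrix b b ℂ} (hσ : σ.PosDef)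
    {ρ : Matrix (a × b) (a × b) ℂ} (hρ : ρ.PosDef) {c : ℝ} (hc : 0 ≤ c) :
    projLE (pinchSnd σ ρ) (c • ampliation a σ) * (ampliation a σ)⁻¹ *
        projLE (pinchSnd σ ρ) (c • ampliation a σ) ≤
      (c * specCount σ) • ρ⁻¹ := by
  set T := ampliation a σ
  set P := pinchSnd σ ρ
  set p := projLE P (c • T)
  have hT : T.PosDef := PosDef.one.kronecker hσ
  have hM : (c • T - P).IsHermitian :=
    ((IsSelfAdjoint.all c).smul hT.isHermitian).sub
      (isSelfAdjoint_pinchSnd hσ.isHermitian hρ.isHermitian)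
  have hp : IsStarProjection p := isStarProjection_projLE hM
  have hpT : Commute p T :=
    (Commute.projLE hM (((Commute.refl T).smul_right c).sub_right
      (commute_pinchSnd hσ.isHermitian ρ).symm)).symm
  have hpPp : p * P * p ≤ c • (p * T * p) := by
    have := projLE_mul_sub_mul_projLE_nonneg hM
    rwa [mul_sub, sub_mul, mul_smul_comm, smul_mul_assoc, sub_nonneg] at this
  refine conjugate_inv_le_smul_inv hp.isSelfAdjoint hT hρ (by positivity) ?_
  calc p * ρ * p ≤ p * ((specCount σ : ℝ) • P) * p :=
        hp.isSelfAdjoint.conjugate_le_conjugate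
          (le_specCount_smul_pinchSnd hσ.isHermitian hρ.posSemidef.nonneg)
    _ = (specCount σ : ℝ) • (p * P * p) := by rw [mul_smul_comm, smul_mul_assoc]
    _ ≤ (specCount σ : ℝ) • (c • T) := by
        gcongr
        exact hpPp.trans (smul_le_smul_of_nonneg_left
          (IsStarProjection.conjugate_le_of_commute hp hT.posSemidef.nonneg hpT) hc)
    _ = (c * specCount σ) • T := by rw [smul_smul, mul_comm]

end PinchedInequality

theorem pinched_operator_inequality_general
    (dA dE : ℕ) (ρ : Matrix (Fin dA × Fin dE) (Fin dA × Fin dE) ℂ)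
    (hρ : ρ.PosDef) (c : ℝ) (hc : 0 < c) :
    (((c * (specCount (ptraceFst ρ) : ℝ) : ℝ) : ℂ) • ρ⁻¹ -
      projLE (pinchSnd (ptraceFst ρ) ρ)
          ((c : ℂ) • ((1 : Matrix (Fin dA) (Fin dA) ℂ) ⊗ₖ ptraceFst ρ)) *
        ((1 : Matrix (Fin dA) (Fin dA) ℂ) ⊗ₖ ptraceFst ρ)⁻¹ *
        projLE (pinchSnd (ptraceFst ρ) ρ)
          ((c : ℂ) • ((1 : Matrix (Fin dA) (Fin dA) ℂ) ⊗ₖ ptraceFst ρ))).PosSemidef := by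
  rcases isEmpty_or_nonempty (Fin dA) with hA | hA
  · convert PosSemidef.zero
    exact Subsingleton.elim _ _
  have h := projLE_pinchSnd_mul_inv_mul_le (posDef_ptraceFst hρ) hρ hc.le
  simp only [ampliation_apply, ← Complex.coe_smul] at h
  exact h

/-- **Pinched operator inequality** used in the achievability proof
(inequality (10) in the paper). -/
theorem pinched_operator_inequality
    (dA dE : ℕ) (ρ : Matrix (Fin dA × Fin dE) (Fin dA × Fin dE) ℂ)
    (hρ : ρ.PosDef) (hρ1 : ρ.trace = 1) (c : ℝ) (hc : 0 < c) :
    (((c * (specCount (ptraceFst ρ) : ℝ) : ℝ) : ℂ) • ρ⁻¹ -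
      projLE (pinchSnd (ptraceFst ρ) ρ)
          ((c : ℂ) • ((1 : Matrix (Fin dA) (Fin dA) ℂ) ⊗ₖ ptraceFst ρ)) *
        ((1 : Matrix (Fin dA) (Fin dA) ℂ) ⊗ₖ ptraceFst ρ)⁻¹ *
        projLE (pinchSnd (ptraceFst ρ) ρ)
          ((c : ℂ) • ((1 : Matrix (Fin dA) (Fin dA) ℂ) ⊗ₖ ptraceFst ρ))).PosSemidef :=
  pinched_operator_inequality_general dA dE ρ hρ c hc

end QD
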